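/- In the learning model with parameters N, K, γ, m, let β ≥ 0 and 0 < δ ≤ 1. With probability at least 1 − 2δ over the random draw of the m training examples, the number of irrelevant features included in M_β (irrelevant features that agree with the class label on at least a 1/2 + β fraction of the m training examples) is at most 8·N·exp(−2·β²·m) + 6·ln(1/δ). -/

import Mathlib

/-!
For an irrelevant variable, each of its two features is included in `M_β` only if a sum of `m`
independent fair bits exceeds its mean by `βm`, which by Hoeffding's inequality has probability
at most `ε = exp (-2β²m)`. Hence the number `W_j ∈ {0, 1, 2}` of included features coming from
the `j`-th irrelevant variable has mean at most `2ε`, and the `W_j` are independent since they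
are functions of disjoint blocks of the independent array. A Chernoff bound at `t = (log 2) / 2`,
where `exp (t w) ≤ 1 + w / 2` on `[0, 2]`, gives `P(∑ W_j ≥ a) ≤ exp (Nε - t a)`, which is at
most `δ` for `a = 8Nε + 6 log (1/δ)`.
-/

open MeasureTheory ProbabilityTheory Real

section Independence

variable {Ω ι κ 𝓧 : Type*} {mΩ : MeasurableSpace Ω} {μ : Measure Ω} [MeasurableSpace 𝓧]

lemma ProbabilityTheory.iIndepFun.curry {X : ι × κ → Ω → 𝓧} (hX : ∀ p, Measurable (X p))
    (h : iIndepFun X μ) : iIndepFun (fun i ω j ↦ X (i, j) ω) μ := by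
  have := h.isProbabilityMeasure
  have : ∀ p, IsProbabilityMeasure (μ.map (X p)) :=
    fun p ↦ Measure.isProbabilityMeasure_map (hX p).aemeasurable
  have hrow i : μ.map (fun ω j ↦ X (i, j) ω) = Measure.infinitePi fun j ↦ μ.map (X (i, j)) :=
    (h.precomp (Prod.mk_right_injective i)).map_fun_eq_infinitePi_map fun j ↦ hX (i, j)
  rw [iIndepFun_iff_map_fun_eq_infinitePi_map fun i ↦ by fun_prop]
  calc μ.map (fun ω i j ↦ X (i, j) ω)
      = (μ.map fun ω p ↦ X p ω).map (MeasurableEquiv.curry ι κ 𝓧) := by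
        rw [Measure.map_map (by fun_prop) (by fun_prop)]; rfl
    _ = Measure.infinitePi fun i ↦ Measure.infinitePi fun j ↦ μ.map (X (i, j)) := by
        rw [h.map_fun_eq_infinitePi_map hX]
        exact Measure.infinitePi_map_curry fun i j ↦ μ.map (X (i, j))
    _ = Measure.infinitePi fun i ↦ μ.map (fun ω j ↦ X (i, j) ω) := by simp_rw [hrow]

end Independence

section Indicators

variable {Ω : Type*} {mΩ : MeasurableSpace Ω} {μ : Measure Ω}

lemma integral_ite_le_one_zero {f : Ω → ℝ} (hf : Measurable f) (c : ℝ) :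
    ∫ ω, (if c ≤ f ω then (1 : ℝ) else 0) ∂μ = μ.real {ω | c ≤ f ω} := by
  rw [← integral_indicator_one (measurableSet_le measurable_const hf)]
  rfl

lemma integral_eq_measureReal_of_zero_or_one {X : Ω → ℝ} (hX : Measurable X)
    (h01 : ∀ ω, X ω = 0 ∨ X ω = 1) : μ[X] = μ.real {ω | X ω = 1} := by
  have hs : MeasurableSet {ω | X ω = 1} := hX (measurableSet_singleton 1)
  rw [← integral_indicator_one hs]
  congr 1 with ω
  rcases h01 ω with h | h <;> simp [h]

lemma ofReal_one_sub_le_measure_le [IsProbabilityMeasure μ] {f : Ω → ℝ} (hf : Measurable f)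
    {a δ : ℝ} (h : μ.real {ω | a ≤ f ω} ≤ δ) : ENNReal.ofReal (1 - δ) ≤ μ {ω | f ω ≤ a} := by
  have hs : MeasurableSet {ω | f ω ≤ a} := measurableSet_le hf measurable_const
  have hcompl : {ω | f ω ≤ a}ᶜ ⊆ {ω | a ≤ f ω} := fun ω (hω : ¬f ω ≤ a) ↦ (not_le.1 hω).le
  rw [ENNReal.ofReal_le_iff_le_toReal (measure_ne_top _ _), ← measureReal_def]
  linarith [probReal_compl_eq_one_sub (μ := μ) hs, measureReal_mono hcompl (μ := μ)]

end Indicators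

section TailBounds

variable {Ω ι : Type*} {mΩ : MeasurableSpace Ω} {μ : Measure Ω} [IsProbabilityMeasure μ]
  [Fintype ι] {X : ι → Ω → ℝ}

lemma measureReal_half_add_mul_card_le_sum_le (hindep : iIndepFun X μ)
    (hX : ∀ i, Measurable (X i)) (hX01 : ∀ i ω, X i ω ∈ Set.Icc 0 1)
    (hmean : ∀ i, μ[X i] ≤ 1 / 2) {β : ℝ} (hβ : 0 ≤ β) :
    μ.real {ω | (1 / 2 + β) * Fintype.card ι ≤ ∑ i, X i ω} ≤
      exp (-2 * β ^ 2 * Fintype.card ι) := by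
  set n : ℝ := (Fintype.card ι : ℝ)
  have hsubG i : HasSubgaussianMGF (fun ω ↦ X i ω - μ[X i]) ((‖(1 : ℝ) - 0‖₊ / 2) ^ 2) μ :=
    hasSubgaussianMGF_of_mem_Icc (hX i).aemeasurable (ae_of_all _ (hX01 i))
  have hcentered : iIndepFun (fun i ω ↦ X i ω - μ[X i]) μ :=
    hindep.comp (fun i (y : ℝ) ↦ y - (μ[X i] : ℝ)) fun _ ↦ measurable_id.sub_const _
  have hoeffding := HasSubgaussianMGF.measure_sum_ge_le_of_iIndepFun hcentered
    (s := Finset.univ) (fun i _ ↦ hsubG i) (by positivity : 0 ≤ β * n)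
  have hsubset : {ω | (1 / 2 + β) * n ≤ ∑ i, X i ω} ⊆
      {ω | β * n ≤ ∑ i, (X i ω - μ[X i])} := by
    intro ω hω
    have : ∑ i, μ[X i] ≤ ∑ _i : ι, (1 / 2 : ℝ) := Finset.sum_le_sum fun i _ ↦ hmean i
    simp only [Set.mem_ofPred_eq, Finset.sum_sub_distrib, Finset.sum_const, Finset.card_univ,
      nsmul_eq_mul] at hω this ⊢
    linarith
  refine (measureReal_mono hsubset).trans (hoeffding.trans_eq ?_)
  congr 1
  rcases eq_or_ne n 0 with hn | hn
  · simp [hn]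
  · simp only [sub_zero, nnnorm_one, one_div, inv_pow, Finset.sum_const, Finset.card_univ,
      nsmul_eq_mul, NNReal.coe_mul, NNReal.coe_natCast, NNReal.coe_inv, NNReal.coe_pow,
      NNReal.coe_ofNat, neg_mul, n]
    field_simp

lemma exp_half_log_two_mul_le {x : ℝ} (hx : x ∈ Set.Icc 0 2) :
    exp (log 2 / 2 * x) ≤ 1 + x / 2 := by
  have h := rpow_one_add_le_one_add_mul_self (s := 1) (by norm_num) (p := x / 2)
    (by linarith [hx.1]) (by linarith [hx.2])
  rw [one_add_one_eq_two, rpow_def_of_pos two_pos, mul_one] at h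
  rwa [show log 2 / 2 * x = log 2 * (x / 2) by ring]

lemma mgf_half_log_two_le {Y : Ω → ℝ} (hY : Measurable Y) (hY02 : ∀ ω, Y ω ∈ Set.Icc 0 2) :
    mgf Y μ (log 2 / 2) ≤ exp (μ[Y] / 2) := by
  have hint : Integrable Y μ := .of_mem_Icc 0 2 hY.aemeasurable (ae_of_all _ hY02)
  calc mgf Y μ (log 2 / 2) ≤ ∫ ω, (1 + Y ω / 2) ∂μ :=
        integral_mono_of_nonneg (ae_of_all _ fun ω ↦ (exp_pos _).le)
          ((integrable_const 1).add (hint.div_const 2))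
          (ae_of_all _ fun ω ↦ exp_half_log_two_mul_le (hY02 ω))
    _ = 1 + μ[Y] / 2 := by
        rw [integral_add (integrable_const 1) (hint.div_const 2), integral_div]; simp
    _ ≤ exp (μ[Y] / 2) := by linarith [add_one_le_exp (μ[Y] / 2)]

lemma measureReal_le_sum_le_exp (hindep : iIndepFun X μ) (hX : ∀ i, Measurable (X i))
    (hX02 : ∀ i ω, X i ω ∈ Set.Icc 0 2) (a : ℝ) :
    μ.real {ω | a ≤ ∑ i, X i ω} ≤ exp (∑ i, μ[X i] / 2 - log 2 / 2 * a) := by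
  have hint i : Integrable (fun ω ↦ exp (log 2 / 2 * X i ω)) μ :=
    .of_mem_Icc 0 (exp (log 2)) (by fun_prop) (ae_of_all _ fun ω ↦ ⟨(exp_pos _).le,
      exp_le_exp.2 (by nlinarith [(hX02 i ω).1, (hX02 i ω).2, log_pos one_lt_two])⟩)
  have hchernoff := measure_ge_le_exp_mul_mgf (X := ∑ i, X i) (μ := μ) a
    (by positivity) (hindep.integrable_exp_mul_sum hX fun i _ ↦ hint i)
  simp only [Finset.sum_apply] at hchernoff
  refine hchernoff.trans ?_
  calc exp (-(log 2 / 2) * a) * mgf (∑ i, X i) μ (log 2 / 2)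
      ≤ exp (-(log 2 / 2) * a) * ∏ i, exp (μ[X i] / 2) := by
        rw [hindep.mgf_sum hX]
        gcongr with i
        · exact fun i _ ↦ mgf_nonneg
        · exact mgf_half_log_two_le (hX i) (hX02 i)
    _ = exp (∑ i, μ[X i] / 2 - log 2 / 2 * a) := by
        rw [← exp_sum, ← exp_add]; ring_nf

end TailBounds

lemma exp_sub_half_log_two_mul_le {x δ : ℝ} (hx : 0 ≤ x) (hδ0 : 0 < δ) (hδ1 : δ ≤ 1) :
    exp (x - log 2 / 2 * (8 * x + 6 * log (1 / δ))) ≤ δ := by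
  have hL : 0 ≤ log (1 / δ) := log_nonneg (one_le_one_div hδ0 hδ1)
  calc exp (x - log 2 / 2 * (8 * x + 6 * log (1 / δ))) ≤ exp (-log (1 / δ)) := by
        gcongr
        nlinarith [log_two_gt_d9]
    _ = δ := by rw [one_div, log_inv, neg_neg, exp_log hδ0]

section IncludedFeatures

variable {Ω ι κ : Type*} {mΩ : MeasurableSpace Ω} {μ : Measure Ω} [Fintype κ]

/-- The number of the two features of a variable (itself and its complement) that agree with the
label on at least `c` examples, when `v t` is the indicator of agreement on example `t`. -/
noncomputable def numIncluded (c : ℝ) (v : κ → ℝ) : ℝ :=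
  (if c ≤ ∑ t, v t then 1 else 0) + (if c ≤ ∑ t, (1 - v t) then 1 else 0)

lemma numIncluded_mem_Icc (c : ℝ) (v : κ → ℝ) : numIncluded c v ∈ Set.Icc 0 2 := by
  unfold numIncluded
  constructor <;> split_ifs <;> norm_num

lemma measurable_numIncluded (c : ℝ) : Measurable (numIncluded (κ := κ) c) := by
  unfold numIncluded
  refine Measurable.add ?_ ?_ <;>
    exact Measurable.ite (measurableSet_le measurable_const (by fun_prop)) measurable_const
      measurable_const

lemma natCast_card_filter_add_card_filter [Fintype ι] (c : ℝ) (v : ι → κ → ℝ) :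
    ((Finset.univ.filter fun j ↦ c ≤ ∑ t, v j t).card : ℝ)
      + (Finset.univ.filter fun j ↦ c ≤ ∑ t, (1 - v j t)).card = ∑ j, numIncluded c (v j) := by
  simp only [numIncluded, Finset.natCast_card_filter, Finset.sum_add_distrib]

lemma integral_numIncluded_le [IsProbabilityMeasure μ] {B : κ → Ω → ℝ} (hindep : iIndepFun B μ)
    (hB : ∀ t, Measurable (B t)) (h01 : ∀ t ω, B t ω = 0 ∨ B t ω = 1)
    (hhalf : ∀ t, μ.real {ω | B t ω = 1} = 1 / 2) {β : ℝ} (hβ : 0 ≤ β) :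
    ∫ ω, numIncluded ((1 / 2 + β) * Fintype.card κ) (B · ω) ∂μ ≤
      2 * exp (-2 * β ^ 2 * Fintype.card κ) := by
  set c := (1 / 2 + β) * Fintype.card κ
  have hmean t : μ[B t] = 1 / 2 :=
    (integral_eq_measureReal_of_zero_or_one (hB t) (h01 t)).trans (hhalf t)
  have hB01 t ω : B t ω ∈ Set.Icc 0 1 := by rcases h01 t ω with h | h <;> simp [h]
  have hflip : iIndepFun (fun t ω ↦ 1 - B t ω) μ :=
    hindep.comp (fun _ y ↦ 1 - y) fun _ ↦ measurable_const.sub measurable_id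
  have hpos := measureReal_half_add_mul_card_le_sum_le hindep hB hB01 (fun t ↦ (hmean t).le) hβ
  have hneg := measureReal_half_add_mul_card_le_sum_le hflip (fun t ↦ (hB t).const_sub 1)
    (fun t ω ↦ by rcases h01 t ω with h | h <;> simp [h])
    (fun t ↦ by rw [integral_sub (integrable_const 1) (.of_mem_Icc 0 1 (hB t).aemeasurable
      (ae_of_all _ (hB01 t))), hmean]; norm_num) hβ
  have hint {f : Ω → ℝ} (hf : Measurable f) :
      Integrable (fun ω ↦ if c ≤ f ω then (1 : ℝ) else 0) μ :=
    .of_mem_Icc 0 1 (Measurable.ite (measurableSet_le measurable_const hf) measurable_const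
      measurable_const).aemeasurable (ae_of_all _ fun ω ↦ by split_ifs <;> norm_num)
  have hsum : Measurable fun ω ↦ ∑ t, B t ω := by fun_prop
  have hsum' : Measurable fun ω ↦ ∑ t, (1 - B t ω) := by fun_prop
  unfold numIncluded
  rw [integral_add (hint hsum) (hint hsum'), integral_ite_le_one_zero hsum,
    integral_ite_le_one_zero hsum']
  linarith

end IncludedFeatures

/-- `A (j, t)` is the indicator that the `j`-th irrelevant variable agrees with the class label on
the `t`-th training example; the two filters are the positive and the negated irrelevant features
included in `M_β`. -/
theorem few_irrelevant_features_general
    {Ω : Type*} [MeasurableSpace Ω] (μ : Measure Ω) [IsProbabilityMeasure μ]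
    (N K m : ℕ) (β δ : ℝ)
    (hβ0 : 0 ≤ β) (hδ0 : 0 < δ) (hδ1 : δ ≤ 1)
    (A : Fin (N - K) × Fin m → Ω → ℝ)
    (hmeas : ∀ p, Measurable (A p))
    (hindep : iIndepFun A μ)
    (h01 : ∀ p ω, A p ω = 0 ∨ A p ω = 1)
    (hp : ∀ p, μ {ω | A p ω = 1} = ENNReal.ofReal (1 / 2)) :
    ENNReal.ofReal (1 - 2 * δ) ≤
      μ {ω | (((Finset.univ.filter (fun j : Fin (N - K) =>
              (1 / 2 + β) * m ≤ ∑ t : Fin m, A (j, t) ω)).card : ℝ)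
            + ((Finset.univ.filter (fun j : Fin (N - K) =>
              (1 / 2 + β) * m ≤ ∑ t : Fin m, (1 - A (j, t) ω))).card : ℝ))
          ≤ 8 * N * Real.exp (-2 * β ^ 2 * m) + 6 * Real.log (1 / δ)} := by
  set ε := exp (-2 * β ^ 2 * m)
  set W : Fin (N - K) → Ω → ℝ := fun j ω ↦ numIncluded ((1 / 2 + β) * m) (fun t ↦ A (j, t) ω)
  have hW j : Measurable (W j) := (measurable_numIncluded _).comp (by fun_prop)
  have hW_indep : iIndepFun W μ :=
    (hindep.curry hmeas).comp _ fun _ ↦ measurable_numIncluded _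
  have hW_mean j : μ[W j] ≤ 2 * ε := by
    simpa only [Fintype.card_fin] using
      integral_numIncluded_le (hindep.precomp (Prod.mk_right_injective j))
        (fun t ↦ hmeas (j, t)) (fun t ↦ h01 (j, t))
        (fun t ↦ by simp [measureReal_def, hp (j, t)]) hβ0
  have hmean_sum : ∑ j, μ[W j] / 2 ≤ N * ε :=
    calc ∑ j, μ[W j] / 2 ≤ ∑ _j : Fin (N - K), ε :=
          Finset.sum_le_sum fun j _ ↦ by linarith [hW_mean j]
      _ = (N - K : ℕ) * ε := by simp
      _ ≤ N * ε := by gcongr; exact Nat.sub_le N K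
  have htail : μ.real {ω | 8 * N * ε + 6 * log (1 / δ) ≤ ∑ j, W j ω} ≤ 2 * δ :=
    calc _ ≤ _ := measureReal_le_sum_le_exp hW_indep hW (fun j ω ↦ numIncluded_mem_Icc _ _) _
      _ ≤ exp (N * ε - log 2 / 2 * (8 * (N * ε) + 6 * log (1 / δ))) :=
          exp_le_exp.2 (by linarith)
      _ ≤ 2 * δ := by linarith [exp_sub_half_log_two_mul_le (x := N * ε) (by positivity) hδ0 hδ1]
  simp_rw [natCast_card_filter_add_card_filter _ fun j t ↦ A (j, t) _]
  exact ofReal_one_sub_le_measure_le (Finset.measurable_sum _ fun j _ ↦ hW j) htail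

/-- **Lemma 4 (few irrelevant features).** In the learning model with parameters `N, K, γ, m`,
let `A (j, t)` be the indicator that the `j`-th irrelevant *variable* agrees with the class label
on the `t`-th training example; these `(N−K)·m` indicators are jointly independent and each
equals `1` with probability `1/2`.  The positive irrelevant feature `j` is included in `M_β` when
`∑ t, A (j,t) ≥ (1/2 + β)·m`, and the negated irrelevant feature `j` is included when
`∑ t, (1 − A (j,t)) ≥ (1/2 + β)·m`. For `β ≥ 0` and `0 < δ ≤ 1`, with probability at least
`1 − 2δ` the total number of irrelevant features included in `M_β` is at most
`8·N·exp(−2·β²·m) + 6·ln(1/δ)`. -/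
theorem few_irrelevant_features
    {Ω : Type*} [MeasurableSpace Ω] (μ : Measure Ω) [IsProbabilityMeasure μ]
    (N K m : ℕ) (hKN : K ≤ N) (β δ : ℝ)
    (hβ0 : 0 ≤ β) (hδ0 : 0 < δ) (hδ1 : δ ≤ 1)
    (A : Fin (N - K) × Fin m → Ω → ℝ)
    (hmeas : ∀ p, Measurable (A p))
    (hindep : iIndepFun A μ)
    (h01 : ∀ p ω, A p ω = 0 ∨ A p ω = 1)
    (hp : ∀ p, μ {ω | A p ω = 1} = ENNReal.ofReal (1 / 2)) :
    ENNReal.ofReal (1 - 2 * δ) ≤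
      μ {ω | (((Finset.univ.filter (fun j : Fin (N - K) =>
              (1 / 2 + β) * m ≤ ∑ t : Fin m, A (j, t) ω)).card : ℝ)
            + ((Finset.univ.filter (fun j : Fin (N - K) =>
              (1 / 2 + β) * m ≤ ∑ t : Fin m, (1 - A (j, t) ω))).card : ℝ))
          ≤ 8 * N * Real.exp (-2 * β ^ 2 * m) + 6 * Real.log (1 / δ)} :=
  few_irrelevant_features_general μ N K m β δ hβ0 hδ0 hδ1 A hmeas hindep h01 hp
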